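/- Define, for each natural number j, the polynomial P_j(x) = (1/2^j) Σ_{k=0}^{j} (binom(j,k))^2 (x−1)^{j−k} (x+1)^k. Let n ≥ 1 and let x_1, …, x_n be the n distinct roots of P_n in (−1,1). Then there exist real weights w_1, …, w_n such that for every real polynomial q of degree at most 2n − 1, Σ_{i=1}^{n} w_i q(x_i) = ∫_{−1}^{1} q(x) dx. -/

import Mathlib

/-!
Rodrigues' formula `Dⁿ (x² - 1)ⁿ = n! 2ⁿ Pₙ` and `n`-fold integration by parts (all boundary
terms vanish because `(x ∓ 1)ⁿ` divides `(x² - 1)ⁿ`) make `Pₙ` orthogonal on `[-1, 1]` to every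
polynomial of degree `< n`. Having degree `≤ n` and `n` distinct roots, `Pₙ` is a nonzero multiple
of the nodal polynomial `ω = ∏ (X - xᵢ)`, which is therefore orthogonal as well. The weights are
those of the interpolatory rule, `wᵢ = ∫ ℓᵢ`, which is exact below degree `n`. For `deg q < 2n`,
divide: `q = ω d + r` with `deg d, deg r < n`; then `r` agrees with `q` at the nodes and
`∫ ω d = 0`.
-/

/-- The `j`-th Legendre polynomial
`P_j(x) = (1/2^j) ∑_{k=0}^{j} (binom(j,k))^2 (x-1)^{j-k} (x+1)^k`. -/
noncomputable def legP (j : ℕ) : Polynomial ℝ :=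
  ((1 : ℝ) / 2 ^ j) • ∑ k ∈ Finset.range (j + 1),
    ((Nat.choose j k : ℝ) ^ 2) • ((Polynomial.X - 1) ^ (j - k) * (Polynomial.X + 1) ^ k)

open Polynomial Finset Nat

theorem Polynomial.eval_iterate_derivative_eq_zero_of_pow_dvd {R : Type*} [CommRing R]
    {p : R[X]} {t : R} {n j : ℕ} (h : (X - C t) ^ n ∣ p) (hj : j < n) :
    (derivative^[j] p).eval t = 0 :=
  dvd_iff_isRoot.mp <| (dvd_pow_self _ <| Nat.sub_ne_zero_of_lt hj).trans
    (pow_sub_dvd_iterate_derivative_of_pow_dvd _ h)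

theorem Lagrange.nodal_dvd {K ι : Type*} [Field K] {s : Finset ι} {v : ι → K} {p : K[X]}
    (hvs : Set.InjOn v s) (hp : ∀ i ∈ s, p.eval (v i) = 0) : Lagrange.nodal s v ∣ p :=
  Finset.prod_dvd_of_coprime
    (fun _ hi _ hj hij =>
      isCoprime_X_sub_C_of_isUnit_sub (sub_ne_zero.2 (hvs.ne hi hj hij)).isUnit)
    fun i hi => dvd_iff_isRoot.2 (hp i hi)

theorem Nat.choose_mul_descFactorial_mul_descFactorial {n k : ℕ} (hk : k ≤ n) :
    n.choose k * (n.descFactorial (n - k) * n.descFactorial k) = n ! * n.choose k ^ 2 := by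
  rw [descFactorial_eq_factorial_mul_choose, descFactorial_eq_factorial_mul_choose,
    choose_symm hk, ← choose_mul_factorial_mul_factorial hk]
  ring

section IntegrationByParts

variable {a b : ℝ}

theorem Polynomial.integral_eval_derivative_mul_eq_neg {f : ℝ[X]} (g : ℝ[X])
    (ha : f.eval a = 0) (hb : f.eval b = 0) :
    ∫ t in a..b, (derivative f * g).eval t = -∫ t in a..b, (f * derivative g).eval t := by
  have h := intervalIntegral.integral_mul_deriv_eq_deriv_mul
    (fun t _ => f.hasDerivAt t) (fun t _ => g.hasDerivAt t)
    (f.derivative.continuous.intervalIntegrable a b)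
    (g.derivative.continuous.intervalIntegrable a b)
  simp only [eval_mul]
  rw [h, ha, hb]
  ring

theorem Polynomial.integral_eval_iterate_derivative_mul {f : ℝ[X]} (g : ℝ[X]) {k : ℕ}
    (hf : ∀ j < k, (derivative^[j] f).eval a = 0 ∧ (derivative^[j] f).eval b = 0) :
    ∫ t in a..b, (derivative^[k] f * g).eval t
      = (-1) ^ k * ∫ t in a..b, (f * derivative^[k] g).eval t := by
  induction k generalizing f with
  | zero => simp
  | succ k ih =>
    obtain ⟨ha, hb⟩ : f.eval a = 0 ∧ f.eval b = 0 := hf 0 k.succ_pos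
    rw [Function.iterate_succ_apply, ih fun j hj => hf (j + 1) (by omega),
      integral_eval_derivative_mul_eq_neg _ ha hb, Function.iterate_succ_apply' derivative,
      pow_succ]
    ring

end IntegrationByParts

def OrthogonalToDegreeLT (a b : ℝ) (n : ℕ) (p : ℝ[X]) : Prop :=
  ∀ g : ℝ[X], g.degree < n → ∫ t in a..b, (p * g).eval t = 0

namespace OrthogonalToDegreeLT

variable {a b : ℝ} {n : ℕ} {p : ℝ[X]}

theorem mul_C (hp : OrthogonalToDegreeLT a b n p) (c : ℝ) :
    OrthogonalToDegreeLT a b n (p * C c) := fun g hg => by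
  rw [mul_assoc, ← smul_eq_C_mul]
  exact hp _ ((degree_smul_le c g).trans_lt hg)

theorem nodal_of_eval_eq_zero {ι : Type*} {s : Finset ι} {v : ι → ℝ}
    (hp : OrthogonalToDegreeLT a b n p) (hp0 : p ≠ 0) (hdeg : p.natDegree ≤ #s)
    (hvs : Set.InjOn v s) (hroot : ∀ i ∈ s, p.eval (v i) = 0) :
    OrthogonalToDegreeLT a b n (Lagrange.nodal s v) := by
  have hfactor : p = Lagrange.nodal s v * C p.leadingCoeff :=
    eq_mul_leadingCoeff_of_monic_of_dvd_of_natDegree_le Lagrange.nodal_monic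
      (Lagrange.nodal_dvd hvs hroot) (by rwa [Lagrange.natDegree_nodal])
  convert hp.mul_C p.leadingCoeff⁻¹ using 1
  calc Lagrange.nodal s v
      = Lagrange.nodal s v * C p.leadingCoeff * C p.leadingCoeff⁻¹ := by
        rw [mul_assoc, ← C_mul, mul_inv_cancel₀ (leadingCoeff_ne_zero.2 hp0), C_1, mul_one]
    _ = p * C p.leadingCoeff⁻¹ := by rw [← hfactor]

end OrthogonalToDegreeLT

section Quadrature

variable {ι : Type*} [DecidableEq ι] {s : Finset ι} {v : ι → ℝ} {a b : ℝ}

noncomputable def interpolatoryWeight (s : Finset ι) (v : ι → ℝ) (a b : ℝ) (i : ι) : ℝ :=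
  ∫ t in a..b, (Lagrange.basis s v i).eval t

theorem sum_interpolatoryWeight_mul_eval_of_degree_lt (hvs : Set.InjOn v s) {f : ℝ[X]}
    (hf : f.degree < #s) :
    ∑ i ∈ s, interpolatoryWeight s v a b i * f.eval (v i) = ∫ t in a..b, f.eval t := by
  conv_rhs => rw [Lagrange.eq_interpolate hvs hf]
  simp only [Lagrange.interpolate_apply, eval_finsetSum, eval_mul, eval_C]
  have hint : ∀ i ∈ s, IntervalIntegrable
      (fun t => f.eval (v i) * (Lagrange.basis s v i).eval t) MeasureTheory.volume a b :=
    fun i _ => (continuous_const.mul (Polynomial.continuous _)).intervalIntegrable a b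
  rw [intervalIntegral.integral_finsetSum hint]
  refine sum_congr rfl fun i _ => ?_
  rw [intervalIntegral.integral_const_mul, interpolatoryWeight, mul_comm]

theorem sum_interpolatoryWeight_mul_eval_of_orthogonal_nodal (hvs : Set.InjOn v s)
    {m : ℕ} (horth : OrthogonalToDegreeLT a b m (Lagrange.nodal s v)) {f : ℝ[X]}
    (hf : f.natDegree < #s + m) :
    ∑ i ∈ s, interpolatoryWeight s v a b i * f.eval (v i) = ∫ t in a..b, f.eval t := by
  set ω := Lagrange.nodal s v
  have hdecomp : f %ₘ ω + ω * (f /ₘ ω) = f := modByMonic_add_div f ω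
  have hω : ω.degree = #s := Lagrange.degree_nodal
  have hrem : (f %ₘ ω).degree < #s := hω ▸ degree_modByMonic_lt f Lagrange.nodal_monic
  have hquot : (f /ₘ ω).degree < m := by
    rcases lt_or_ge f.natDegree #s with hlt | hge
    · rw [(divByMonic_eq_zero_iff Lagrange.nodal_monic).2
        (hω ▸ degree_le_natDegree.trans_lt (Nat.cast_lt.2 hlt)), degree_zero]
      exact WithBot.bot_lt_coe m
    refine degree_le_natDegree.trans_lt (Nat.cast_lt.2 ?_)
    rw [natDegree_divByMonic f Lagrange.nodal_monic, Lagrange.natDegree_nodal]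
    omega
  have hnodes : ∀ i ∈ s, f.eval (v i) = (f %ₘ ω).eval (v i) := fun i hi => by
    conv_lhs => rw [← hdecomp]
    simp [ω, Lagrange.eval_nodal_at_node hi]
  calc ∑ i ∈ s, interpolatoryWeight s v a b i * f.eval (v i)
      = ∑ i ∈ s, interpolatoryWeight s v a b i * (f %ₘ ω).eval (v i) :=
        sum_congr rfl fun i hi => by rw [hnodes i hi]
    _ = ∫ t in a..b, (f %ₘ ω).eval t := sum_interpolatoryWeight_mul_eval_of_degree_lt hvs hrem
    _ = (∫ t in a..b, (f %ₘ ω).eval t) + ∫ t in a..b, (ω * (f /ₘ ω)).eval t := by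
        rw [horth _ hquot, add_zero]
    _ = ∫ t in a..b, f.eval t := by
        rw [← intervalIntegral.integral_add ((f %ₘ ω).continuous.intervalIntegrable _ _)
          ((ω * (f /ₘ ω)).continuous.intervalIntegrable _ _)]
        simp only [← eval_add, hdecomp]

end Quadrature

noncomputable def rodriguesPoly (n : ℕ) : ℝ[X] := (X - C 1) ^ n * (X - C (-1)) ^ n

theorem eval_iterate_derivative_rodriguesPoly {n j : ℕ} (hj : j < n) :
    (derivative^[j] (rodriguesPoly n)).eval (-1) = 0 ∧
      (derivative^[j] (rodriguesPoly n)).eval 1 = 0 :=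
  ⟨eval_iterate_derivative_eq_zero_of_pow_dvd (dvd_mul_left _ _) hj,
    eval_iterate_derivative_eq_zero_of_pow_dvd (dvd_mul_right _ _) hj⟩

theorem iterate_derivative_rodriguesPoly (n : ℕ) :
    derivative^[n] (rodriguesPoly n) = C ((n ! : ℝ) * 2 ^ n) * legP n := by
  rw [legP, ← smul_eq_C_mul, smul_smul, mul_assoc, mul_one_div_cancel (by positivity), mul_one,
    smul_sum, ← sum_range_reflect, rodriguesPoly, iterate_derivative_mul]
  refine sum_congr rfl fun k hk => ?_
  have hk : k ≤ n := Nat.lt_succ_iff.1 (mem_range.1 hk)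
  rw [iterate_derivative_X_sub_pow, iterate_derivative_X_sub_pow,
    show n + 1 - 1 - k = n - k by omega, Nat.sub_sub_self hk, choose_symm hk, smul_smul,
    smul_mul_smul_comm, smul_smul]
  simp only [map_neg, C_1, sub_neg_eq_add, ← Nat.cast_smul_eq_nsmul ℝ,
    choose_mul_descFactorial_mul_descFactorial hk]
  push_cast
  rfl

theorem eval_one_legP (n : ℕ) : (legP n).eval 1 = 1 := by
  rw [legP, eval_smul, eval_finsetSum, Finset.sum_eq_single n]
  · norm_num
  · intro k hk hkn
    rw [Finset.mem_range, Nat.lt_succ_iff] at hk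
    simp [zero_pow (show n - k ≠ 0 by omega)]
  · exact fun h => (h (self_mem_range_succ n)).elim

theorem natDegree_legP_le (n : ℕ) : (legP n).natDegree ≤ n := by
  refine (natDegree_smul_le _ _).trans <| natDegree_sum_le_of_forall_le _ _ fun k hk => ?_
  rw [Finset.mem_range, Nat.lt_succ_iff] at hk
  refine (natDegree_smul_le _ _).trans ?_
  compute_degree
  omega

theorem orthogonalToDegreeLT_legP (n : ℕ) : OrthogonalToDegreeLT (-1) 1 n (legP n) := by
  have hW : OrthogonalToDegreeLT (-1) 1 n (derivative^[n] (rodriguesPoly n)) := fun g hg => by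
    rw [integral_eval_iterate_derivative_mul g fun j hj => eval_iterate_derivative_rodriguesPoly hj,
      iterate_derivative_eq_zero_of_degree_lt hg]
    simp
  have hc : ((n ! : ℝ) * 2 ^ n) ≠ 0 := by positivity
  have := hW.mul_C ((n ! : ℝ) * 2 ^ n)⁻¹
  rwa [iterate_derivative_rodriguesPoly, mul_comm (C _), mul_assoc, ← C_mul,
    mul_inv_cancel₀ hc, C_1, mul_one] at this

theorem gaussian_quadrature_exactness_general (n : ℕ) (hn : 1 ≤ n)
    (x : Fin n → ℝ) (hx : Function.Injective x)
    (hroot : ∀ i, (legP n).eval (x i) = 0) :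
    ∃ w : Fin n → ℝ, ∀ q : Polynomial ℝ, q.degree ≤ (2 * n - 1 : ℕ) →
      ∑ i : Fin n, w i * q.eval (x i) = ∫ t in (-1 : ℝ)..1, q.eval t := by
  have hcard : #(univ : Finset (Fin n)) = n := card_fin n
  have hlegP0 : legP n ≠ 0 := fun h => by simpa [h] using eval_one_legP n
  have horth : OrthogonalToDegreeLT (-1) 1 n (Lagrange.nodal univ x) :=
    (orthogonalToDegreeLT_legP n).nodal_of_eval_eq_zero hlegP0
      ((natDegree_legP_le n).trans hcard.ge) hx.injOn fun i _ => hroot i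
  refine ⟨interpolatoryWeight univ x (-1) 1, fun q hq => ?_⟩
  have hdeg : q.natDegree < #(univ : Finset (Fin n)) + n := by
    have := natDegree_le_of_degree_le hq
    omega
  exact sum_interpolatoryWeight_mul_eval_of_orthogonal_nodal hx.injOn horth hdeg

/-- Gaussian quadrature at the Legendre nodes: if `x_1, …, x_n` are the `n` distinct
roots of `P_n` in `(-1,1)`, there exist weights `w_1, …, w_n` such that
`∑ w_i q(x_i) = ∫_{-1}^{1} q` for every polynomial `q` of degree at most `2n - 1`. -/
theorem gaussian_quadrature_exactness (n : ℕ) (hn : 1 ≤ n)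
    (x : Fin n → ℝ) (hx : Function.Injective x)
    (hroot : ∀ i, (legP n).eval (x i) = 0)
    (hmem : ∀ i, x i ∈ Set.Ioo (-1 : ℝ) 1) :
    ∃ w : Fin n → ℝ, ∀ q : Polynomial ℝ, q.degree ≤ (2 * n - 1 : ℕ) →
      ∑ i : Fin n, w i * q.eval (x i) = ∫ t in (-1 : ℝ)..1, q.eval t :=
  gaussian_quadrature_exactness_general n hn x hx hroot
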